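/- If g_1 and g_2 are quasi-Artinian Leibniz algebras over the same field, then their direct sum g = g_1 ⊕ g_2, equipped with the componentwise bracket [(x_1,x_2),(y_1,y_2)] = ([x_1,y_1],[x_2,y_2]), is a quasi-Artinian Leibniz algebra. -/
import Mathlib


universe u v

/-- A (left) Leibniz algebra over a field `K`: a `K`-vector space with a bilinear
bracket satisfying the left Leibniz identity. -/
class LeibnizAlgebra (K : Type u) (g : Type v) [Field K] [AddCommGroup g] [Module K g]
    extends Bracket g g where
  add_bracket : ∀ x y z : g, ⁅x + y, z⁆ = ⁅x, z⁆ + ⁅y, z⁆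
  bracket_add : ∀ x y z : g, ⁅x, y + z⁆ = ⁅x, y⁆ + ⁅x, z⁆
  smul_bracket : ∀ (c : K) (x y : g), ⁅c • x, y⁆ = c • ⁅x, y⁆
  bracket_smul : ∀ (c : K) (x y : g), ⁅x, c • y⁆ = c • ⁅x, y⁆
  leibniz : ∀ x y z : g, ⁅x, ⁅y, z⁆⁆ = ⁅⁅x, y⁆, z⁆ + ⁅y, ⁅x, z⁆⁆

namespace Leibniz

section Defs

variable (K : Type u) (g : Type v) [Field K] [AddCommGroup g] [Module K g] [LeibnizAlgebra K g]

lemma zero_bracket (y : g) : ⁅(0 : g), y⁆ = 0 := by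
  have h := LeibnizAlgebra.smul_bracket (0 : K) (0 : g) y
  simpa using h

lemma bracket_zero (y : g) : ⁅y, (0 : g)⁆ = 0 := by
  have h := LeibnizAlgebra.bracket_smul (0 : K) y (0 : g)
  simpa using h

lemma neg_bracket (x y : g) : ⁅-x, y⁆ = -⁅x, y⁆ := by
  have h := LeibnizAlgebra.smul_bracket (-1 : K) x y
  simpa using h

lemma bracket_neg (x y : g) : ⁅x, -y⁆ = -⁅x, y⁆ := by
  have h := LeibnizAlgebra.bracket_smul (-1 : K) x y
  simpa using h

lemma sub_bracket (x x' y : g) : ⁅x - x', y⁆ = ⁅x, y⁆ - ⁅x', y⁆ := by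
  rw [sub_eq_add_neg, LeibnizAlgebra.add_bracket, neg_bracket K, ← sub_eq_add_neg]

lemma bracket_sub (x y y' : g) : ⁅x, y - y'⁆ = ⁅x, y⁆ - ⁅x, y'⁆ := by
  rw [sub_eq_add_neg, LeibnizAlgebra.bracket_add, bracket_neg K, ← sub_eq_add_neg]

/-- A (two-sided) ideal of a Leibniz algebra: a subspace `I` with `⁅g,I⁆ ⊆ I` and
`⁅I,g⁆ ⊆ I`. -/
def IsIdeal (I : Submodule K g) : Prop :=
  ∀ x : g, ∀ a ∈ I, ⁅x, a⁆ ∈ I ∧ ⁅a, x⁆ ∈ I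

/-- The bracket `[A, B]` of two subspaces: the span of all brackets `⁅a, b⁆`. -/
def bk (A B : Submodule K g) : Submodule K g :=
  Submodule.span K {z : g | ∃ a ∈ A, ∃ b ∈ B, z = ⁅a, b⁆}

/-- The derived series of a subspace `I`, computed in `g`:
`I^(0) = I`, `I^(n+1) = [I^(n), I^(n)]`. -/
def subDerived (I : Submodule K g) : ℕ → Submodule K g
  | 0 => I
  | n + 1 => bk K g (subDerived I n) (subDerived I n)

/-- The derived series of `g`: `g^(0) = g`, `g^(n+1) = [g^(n), g^(n)]`. -/
def derived : ℕ → Submodule K g := subDerived K g ⊤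

/-- A Leibniz algebra is solvable if `g^(n) = 0` for some `n`. -/
def IsSolvable : Prop := ∃ n : ℕ, derived K g n = ⊥

/-- A Leibniz algebra is abelian if its bracket is identically zero. -/
def IsAbelian : Prop := ∀ x y : g, ⁅x, y⁆ = 0

/-- A nonzero Leibniz algebra is simple if its only two-sided ideals are `⊥` and `⊤`. -/
def IsSimpleAlg : Prop :=
  (∃ x : g, x ≠ 0) ∧ ∀ I : Submodule K g, IsIdeal K g I → I = ⊥ ∨ I = ⊤

/-- A Leibniz algebra `g` is quasi-Artinian if for every descending chain of ideals
`I_1 ⊇ I_2 ⊇ ⋯` there is `m` with `[g^(m), I_m] ⊆ I_n` and `[I_m, g^(m)] ⊆ I_n` for all `n`. -/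
def QuasiArtinian : Prop :=
  ∀ I : ℕ → Submodule K g, (∀ n, IsIdeal K g (I n)) → (∀ n, I (n + 1) ≤ I n) →
    ∃ m : ℕ, ∀ n : ℕ,
      bk K g (derived K g m) (I m) ≤ I n ∧ bk K g (I m) (derived K g m) ≤ I n

/-- A Leibniz algebra is Artinian if every descending chain of two-sided ideals stabilizes. -/
def ArtinianAlg : Prop :=
  ∀ I : ℕ → Submodule K g, (∀ n, IsIdeal K g (I n)) → (∀ n, I (n + 1) ≤ I n) →
    ∃ m : ℕ, ∀ n : ℕ, m ≤ n → I n = I m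

/-- A solvable ideal: an ideal which is solvable (as a Leibniz algebra). -/
def IsSolvableIdeal (I : Submodule K g) : Prop :=
  IsIdeal K g I ∧ ∃ n : ℕ, subDerived K g I n = ⊥

/-- An abelian ideal: an ideal whose bracket vanishes identically. -/
def IsAbelianIdeal (I : Submodule K g) : Prop :=
  IsIdeal K g I ∧ ∀ x ∈ I, ∀ y ∈ I, ⁅x, y⁆ = (0 : g)

/-- Minimal condition on solvable ideals: every descending chain of solvable
two-sided ideals stabilizes. -/
def MinOnSolvableIdeals : Prop :=
  ∀ I : ℕ → Submodule K g, (∀ n, IsSolvableIdeal K g (I n)) → (∀ n, I (n + 1) ≤ I n) →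
    ∃ m : ℕ, ∀ n : ℕ, m ≤ n → I n = I m

/-- Minimal condition on abelian ideals: every descending chain of abelian
two-sided ideals stabilizes. -/
def MinOnAbelianIdeals : Prop :=
  ∀ I : ℕ → Submodule K g, (∀ n, IsAbelianIdeal K g (I n)) → (∀ n, I (n + 1) ≤ I n) →
    ∃ m : ℕ, ∀ n : ℕ, m ≤ n → I n = I m

/-- `I` is a two-sided ideal of the subalgebra `A` (both viewed as subspaces of `g`). -/
def IsIdealIn (A I : Submodule K g) : Prop :=
  I ≤ A ∧ ∀ x ∈ A, ∀ a ∈ I, ⁅x, a⁆ ∈ I ∧ ⁅a, x⁆ ∈ I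

/-- A prime ideal: a proper two-sided ideal `P` such that `[h₁, h₂] ⊆ P` for ideals
`h₁, h₂` forces `h₁ ⊆ P` or `h₂ ⊆ P`. -/
def IsPrimeIdeal (P : Submodule K g) : Prop :=
  IsIdeal K g P ∧ P ≠ ⊤ ∧
    ∀ h₁ h₂ : Submodule K g, IsIdeal K g h₁ → IsIdeal K g h₂ →
      bk K g h₁ h₂ ≤ P → h₁ ≤ P ∨ h₂ ≤ P

/-- `Leib(g)`: the subspace spanned by all squares `⁅x, x⁆`. -/
def leibIdeal : Submodule K g :=
  Submodule.span K {z : g | ∃ x : g, z = ⁅x, x⁆}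

/-- Given a subspace `C`, the preimage of the center of `g/C`:
all `x` with `⁅x, y⁆ ∈ C` and `⁅y, x⁆ ∈ C` for every `y`. -/
def centerStep (C : Submodule K g) : Submodule K g where
  carrier := {x : g | ∀ y : g, ⁅x, y⁆ ∈ C ∧ ⁅y, x⁆ ∈ C}
  add_mem' := by
    intro a b ha hb
    intro y
    constructor
    · rw [LeibnizAlgebra.add_bracket]; exact C.add_mem (ha y).1 (hb y).1
    · rw [LeibnizAlgebra.bracket_add]; exact C.add_mem (ha y).2 (hb y).2
  zero_mem' := by
    intro y
    constructor
    · rw [zero_bracket K]; exact C.zero_mem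
    · rw [bracket_zero K]; exact C.zero_mem
  smul_mem' := by
    intro c a ha y
    constructor
    · rw [LeibnizAlgebra.smul_bracket]; exact C.smul_mem c (ha y).1
    · rw [LeibnizAlgebra.bracket_smul]; exact C.smul_mem c (ha y).2

/-- The transfinite upper central series of `g`: `ζ_0 = 0`,
`ζ_{α+1}/ζ_α = Z(g/ζ_α)`, and `ζ_ρ = ⋃_{α<ρ} ζ_α` at limit ordinals. -/
noncomputable def zeta : Ordinal.{0} → Submodule K g := fun o =>
  Ordinal.limitRecOn o ⊥ (fun _ C => centerStep K g C)
    (fun o _ ih => ⨆ (a : Ordinal.{0}) (h : a < o), ih a h)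

/-- `g` is hypercentral if `ζ_α(g) = g` for some ordinal `α`. -/
def Hypercentral : Prop := ∃ o : Ordinal.{0}, zeta K g o = ⊤

end Defs

section Quotient

variable {K : Type u} {g : Type v} [Field K] [AddCommGroup g] [Module K g] [LeibnizAlgebra K g]

/-- The bracket induced on the quotient `g ⧸ I` by a two-sided ideal `I`. -/
def quotBracket (I : Submodule K g) (hI : IsIdeal K g I) : g ⧸ I → g ⧸ I → g ⧸ I :=
  Quotient.map₂ (fun x y : g => ⁅x, y⁆) (by
    intro x x' hx y y' hy
    have hx' : x - x' ∈ I := (Submodule.quotientRel_def I).1 hx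
    have hy' : y - y' ∈ I := (Submodule.quotientRel_def I).1 hy
    refine (Submodule.quotientRel_def I).2 ?_
    have key : ⁅x, y⁆ - ⁅x', y'⁆ = ⁅x - x', y⁆ + ⁅x', y - y'⁆ := by
      rw [sub_bracket K, bracket_sub K]
      abel
    rw [key]
    exact I.add_mem (hI y (x - x') hx').2 (hI x' (y - y') hy').1)

@[simp] lemma quotBracket_mk (I : Submodule K g) (hI : IsIdeal K g I) (x y : g) :
    quotBracket I hI (Submodule.Quotient.mk x) (Submodule.Quotient.mk y) =
      Submodule.Quotient.mk ⁅x, y⁆ := rfl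

/-- The quotient Leibniz algebra `g ⧸ I` of `g` by a two-sided ideal `I`. -/
def quotLeibniz (I : Submodule K g) (hI : IsIdeal K g I) : LeibnizAlgebra K (g ⧸ I) where
  bracket := quotBracket I hI
  add_bracket X Y Z := by
    obtain ⟨x, rfl⟩ := Submodule.Quotient.mk_surjective I X
    obtain ⟨y, rfl⟩ := Submodule.Quotient.mk_surjective I Y
    obtain ⟨z, rfl⟩ := Submodule.Quotient.mk_surjective I Z
    show quotBracket I hI (Submodule.Quotient.mk x + Submodule.Quotient.mk y)
        (Submodule.Quotient.mk z) = _
    rw [← Submodule.Quotient.mk_add, quotBracket_mk]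
    show _ = quotBracket I hI (Submodule.Quotient.mk x) (Submodule.Quotient.mk z) +
      quotBracket I hI (Submodule.Quotient.mk y) (Submodule.Quotient.mk z)
    rw [quotBracket_mk, quotBracket_mk, ← Submodule.Quotient.mk_add,
      LeibnizAlgebra.add_bracket]
  bracket_add X Y Z := by
    obtain ⟨x, rfl⟩ := Submodule.Quotient.mk_surjective I X
    obtain ⟨y, rfl⟩ := Submodule.Quotient.mk_surjective I Y
    obtain ⟨z, rfl⟩ := Submodule.Quotient.mk_surjective I Z
    show quotBracket I hI (Submodule.Quotient.mk x)
        (Submodule.Quotient.mk y + Submodule.Quotient.mk z) = _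
    rw [← Submodule.Quotient.mk_add, quotBracket_mk]
    show _ = quotBracket I hI (Submodule.Quotient.mk x) (Submodule.Quotient.mk y) +
      quotBracket I hI (Submodule.Quotient.mk x) (Submodule.Quotient.mk z)
    rw [quotBracket_mk, quotBracket_mk, ← Submodule.Quotient.mk_add,
      LeibnizAlgebra.bracket_add]
  smul_bracket c X Y := by
    obtain ⟨x, rfl⟩ := Submodule.Quotient.mk_surjective I X
    obtain ⟨y, rfl⟩ := Submodule.Quotient.mk_surjective I Y
    show quotBracket I hI (c • Submodule.Quotient.mk x) (Submodule.Quotient.mk y) =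
      c • quotBracket I hI (Submodule.Quotient.mk x) (Submodule.Quotient.mk y)
    rw [← Submodule.Quotient.mk_smul, quotBracket_mk, quotBracket_mk,
      ← Submodule.Quotient.mk_smul, LeibnizAlgebra.smul_bracket]
  bracket_smul c X Y := by
    obtain ⟨x, rfl⟩ := Submodule.Quotient.mk_surjective I X
    obtain ⟨y, rfl⟩ := Submodule.Quotient.mk_surjective I Y
    show quotBracket I hI (Submodule.Quotient.mk x) (c • Submodule.Quotient.mk y) =
      c • quotBracket I hI (Submodule.Quotient.mk x) (Submodule.Quotient.mk y)
    rw [← Submodule.Quotient.mk_smul, quotBracket_mk, quotBracket_mk,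
      ← Submodule.Quotient.mk_smul, LeibnizAlgebra.bracket_smul]
  leibniz X Y Z := by
    obtain ⟨x, rfl⟩ := Submodule.Quotient.mk_surjective I X
    obtain ⟨y, rfl⟩ := Submodule.Quotient.mk_surjective I Y
    obtain ⟨z, rfl⟩ := Submodule.Quotient.mk_surjective I Z
    show quotBracket I hI (Submodule.Quotient.mk x)
        (quotBracket I hI (Submodule.Quotient.mk y) (Submodule.Quotient.mk z)) = _
    rw [quotBracket_mk, quotBracket_mk]
    show _ = quotBracket I hI
        (quotBracket I hI (Submodule.Quotient.mk x) (Submodule.Quotient.mk y))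
        (Submodule.Quotient.mk z) +
      quotBracket I hI (Submodule.Quotient.mk y)
        (quotBracket I hI (Submodule.Quotient.mk x) (Submodule.Quotient.mk z))
    rw [quotBracket_mk, quotBracket_mk, quotBracket_mk, quotBracket_mk,
      ← Submodule.Quotient.mk_add, LeibnizAlgebra.leibniz]

/-- A two-sided ideal of a Leibniz algebra, regarded as a Leibniz algebra itself. -/
def idealLeibniz (I : Submodule K g) (hI : IsIdeal K g I) : LeibnizAlgebra K I where
  bracket a b := ⟨⁅(a : g), (b : g)⁆, (hI (a : g) (b : g) b.2).1⟩
  add_bracket a b c := Subtype.ext (by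
    show ⁅((a + b : I) : g), (c : g)⁆ = ⁅(a : g), (c : g)⁆ + ⁅(b : g), (c : g)⁆
    rw [Submodule.coe_add, LeibnizAlgebra.add_bracket])
  bracket_add a b c := Subtype.ext (by
    show ⁅(a : g), ((b + c : I) : g)⁆ = ⁅(a : g), (b : g)⁆ + ⁅(a : g), (c : g)⁆
    rw [Submodule.coe_add, LeibnizAlgebra.bracket_add])
  smul_bracket c a b := Subtype.ext (by
    show ⁅((c • a : I) : g), (b : g)⁆ = c • ⁅(a : g), (b : g)⁆
    rw [Submodule.coe_smul, LeibnizAlgebra.smul_bracket])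
  bracket_smul c a b := Subtype.ext (by
    show ⁅(a : g), ((c • b : I) : g)⁆ = c • ⁅(a : g), (b : g)⁆
    rw [Submodule.coe_smul, LeibnizAlgebra.bracket_smul])
  leibniz a b c := Subtype.ext (by
    show ⁅(a : g), ⁅(b : g), (c : g)⁆⁆ =
      ⁅⁅(a : g), (b : g)⁆, (c : g)⁆ + ⁅(b : g), ⁅(a : g), (c : g)⁆⁆
    exact LeibnizAlgebra.leibniz (a : g) (b : g) (c : g))

end Quotient

section Constructions

variable {K : Type u} [Field K]

/-- The direct sum of two Leibniz algebras, with componentwise bracket. -/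
instance prodLeibniz (g₁ : Type v) (g₂ : Type v) [AddCommGroup g₁] [Module K g₁]
    [LeibnizAlgebra K g₁] [AddCommGroup g₂] [Module K g₂] [LeibnizAlgebra K g₂] :
    LeibnizAlgebra K (g₁ × g₂) where
  bracket x y := (⁅x.1, y.1⁆, ⁅x.2, y.2⁆)
  add_bracket x y z := Prod.ext_iff.2
    ⟨LeibnizAlgebra.add_bracket x.1 y.1 z.1, LeibnizAlgebra.add_bracket x.2 y.2 z.2⟩
  bracket_add x y z := Prod.ext_iff.2
    ⟨LeibnizAlgebra.bracket_add x.1 y.1 z.1, LeibnizAlgebra.bracket_add x.2 y.2 z.2⟩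
  smul_bracket c x y := Prod.ext_iff.2
    ⟨LeibnizAlgebra.smul_bracket c x.1 y.1, LeibnizAlgebra.smul_bracket c x.2 y.2⟩
  bracket_smul c x y := Prod.ext_iff.2
    ⟨LeibnizAlgebra.bracket_smul c x.1 y.1, LeibnizAlgebra.bracket_smul c x.2 y.2⟩
  leibniz x y z := Prod.ext_iff.2
    ⟨LeibnizAlgebra.leibniz x.1 y.1 z.1, LeibnizAlgebra.leibniz x.2 y.2 z.2⟩

/-- The direct sum of countably many copies of a Leibniz algebra `H`
(finitely supported sequences), with componentwise bracket. -/
noncomputable instance finsuppLeibniz (H : Type v) [AddCommGroup H] [Module K H]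
    [LeibnizAlgebra K H] : LeibnizAlgebra K (ℕ →₀ H) where
  bracket f h := Finsupp.zipWith (fun a b : H => ⁅a, b⁆) (zero_bracket K H 0) f h
  add_bracket f f' h := by
    ext i
    simp only [Finsupp.zipWith_apply, Finsupp.add_apply]
    exact LeibnizAlgebra.add_bracket (f i) (f' i) (h i)
  bracket_add f h h' := by
    ext i
    simp only [Finsupp.zipWith_apply, Finsupp.add_apply]
    exact LeibnizAlgebra.bracket_add (f i) (h i) (h' i)
  smul_bracket c f h := by
    ext i
    simp only [Finsupp.zipWith_apply, Finsupp.smul_apply]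
    exact LeibnizAlgebra.smul_bracket c (f i) (h i)
  bracket_smul c f h := by
    ext i
    simp only [Finsupp.zipWith_apply, Finsupp.smul_apply]
    exact LeibnizAlgebra.bracket_smul c (f i) (h i)
  leibniz f h k := by
    ext i
    simp only [Finsupp.zipWith_apply, Finsupp.add_apply]
    exact LeibnizAlgebra.leibniz (f i) (h i) (k i)

end Constructions

end Leibniz

open Leibniz

section AuxQA

variable (K : Type u) [Field K] (g : Type v) [AddCommGroup g] [Module K g] [LeibnizAlgebra K g]

lemma bracket_mem_bk {A B : Submodule K g} {a b : g} (ha : a ∈ A) (hb : b ∈ B) :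
    ⁅a, b⁆ ∈ bk K g A B :=
  Submodule.subset_span ⟨a, ha, b, hb, rfl⟩

lemma bk_mono {A A' B B' : Submodule K g} (hA : A ≤ A') (hB : B ≤ B') :
    bk K g A B ≤ bk K g A' B' := by
  apply Submodule.span_mono
  rintro z ⟨a, ha, b, hb, rfl⟩
  exact ⟨a, hA ha, b, hB hb, rfl⟩

lemma derived_succ_le (n : ℕ) : derived K g (n + 1) ≤ derived K g n := by
  induction n with
  | zero => exact le_top
  | succ n ih => exact bk_mono K g ih ih

lemma derived_antitone {m n : ℕ} (h : m ≤ n) : derived K g n ≤ derived K g m := by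
  induction n with
  | zero => simp_all
  | succ n ih =>
    rcases Nat.lt_or_ge m (n + 1) with h' | h'
    · exact le_trans (derived_succ_le K g n) (ih (Nat.lt_succ_iff.mp h'))
    · have : m = n + 1 := le_antisymm h h'
      subst this; exact le_rfl

lemma chain_antitone {I : ℕ → Submodule K g} (hd : ∀ n, I (n + 1) ≤ I n)
    {m n : ℕ} (h : m ≤ n) : I n ≤ I m := by
  induction n with
  | zero => simp_all
  | succ n ih =>
    rcases Nat.lt_or_ge m (n + 1) with h' | h'
    · exact le_trans (hd n) (ih (Nat.lt_succ_iff.mp h'))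
    · have : m = n + 1 := le_antisymm h h'
      subst this; exact le_rfl

end AuxQA

section ProdAux

variable (K : Type u) [Field K] (g₁ g₂ : Type v)
    [AddCommGroup g₁] [Module K g₁] [LeibnizAlgebra K g₁]
    [AddCommGroup g₂] [Module K g₂] [LeibnizAlgebra K g₂]

lemma prod_bracket_def (x y : g₁ × g₂) :
    ⁅x, y⁆ = (⁅x.1, y.1⁆, ⁅x.2, y.2⁆) := rfl

lemma derived_prod_le (n : ℕ) :
    derived K (g₁ × g₂) n ≤ (derived K g₁ n).prod (derived K g₂ n) := by
  induction n with
  | zero => simp [derived, subDerived, Submodule.prod_top]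
  | succ n ih =>
    show bk K (g₁ × g₂) (derived K (g₁ × g₂) n) (derived K (g₁ × g₂) n) ≤ _
    rw [Leibniz.bk, Submodule.span_le]
    rintro z ⟨a, ha, b, hb, rfl⟩
    have ha' := ih ha
    have hb' := ih hb
    rw [Submodule.mem_prod] at ha' hb'
    refine Submodule.mem_prod.2 ?_
    rw [prod_bracket_def]
    exact ⟨bracket_mem_bk K g₁ ha'.1 hb'.1, bracket_mem_bk K g₂ ha'.2 hb'.2⟩

end ProdAux

section KeyLemma

variable (K : Type u) [Field K] (g : Type v) [AddCommGroup g] [Module K g] [LeibnizAlgebra K g]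

/-- Key lemma: if `A` is a descending chain with the quasi-Artinian conclusion at `m₁`,
`x₁` brackets into `A (M+1)` with everything, and `a ∈ g^(M+1)` with `m₁ ≤ M`, then
`⁅a,x₁⁆` and `⁅x₁,a⁆` lie in every `A n`. -/
lemma qa_key (A : ℕ → Submodule K g) (hd : ∀ n, A (n + 1) ≤ A n) (m₁ : ℕ)
    (hm₁ : ∀ n, bk K g (derived K g m₁) (A m₁) ≤ A n ∧
      bk K g (A m₁) (derived K g m₁) ≤ A n)
    (M : ℕ) (hM : m₁ ≤ M) (x1 : g)
    (hx1 : ∀ u : g, ⁅u, x1⁆ ∈ A (M + 1) ∧ ⁅x1, u⁆ ∈ A (M + 1))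
    {a : g} (ha : a ∈ derived K g (M + 1)) (n : ℕ) :
    ⁅a, x1⁆ ∈ A n ∧ ⁅x1, a⁆ ∈ A n := by
  have hAle : A (M + 1) ≤ A m₁ := chain_antitone K g hd (Nat.le_succ_of_le hM)
  have hDle : derived K g M ≤ derived K g m₁ := derived_antitone K g hM
  have ha' : a ∈ bk K g (derived K g M) (derived K g M) := ha
  refine Submodule.span_induction ?_ ?_ ?_ ?_ ha'
  · rintro z ⟨u, hu, v, hv, rfl⟩
    have hu' : u ∈ derived K g m₁ := hDle hu
    have hv' : v ∈ derived K g m₁ := hDle hv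
    constructor
    · -- ⁅⁅u,v⁆,x1⁆ = ⁅u,⁅v,x1⁆⁆ - ⁅v,⁅u,x1⁆⁆
      have hlz : ⁅u, ⁅v, x1⁆⁆ = ⁅⁅u, v⁆, x1⁆ + ⁅v, ⁅u, x1⁆⁆ :=
        LeibnizAlgebra.leibniz u v x1
      have he : ⁅⁅u, v⁆, x1⁆ = ⁅u, ⁅v, x1⁆⁆ - ⁅v, ⁅u, x1⁆⁆ := by
        rw [hlz]; abel
      rw [he]
      refine (A n).sub_mem ?_ ?_
      · exact (hm₁ n).1 (bracket_mem_bk K g hu' (hAle (hx1 v).1))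
      · exact (hm₁ n).1 (bracket_mem_bk K g hv' (hAle (hx1 u).1))
    · have hlz : ⁅x1, ⁅u, v⁆⁆ = ⁅⁅x1, u⁆, v⁆ + ⁅u, ⁅x1, v⁆⁆ :=
        LeibnizAlgebra.leibniz x1 u v
      rw [hlz]
      refine (A n).add_mem ?_ ?_
      · exact (hm₁ n).2 (bracket_mem_bk K g (hAle (hx1 u).2) hv')
      · exact (hm₁ n).1 (bracket_mem_bk K g hu' (hAle (hx1 v).2))
  · constructor
    · rw [zero_bracket K g]; exact (A n).zero_mem
    · rw [bracket_zero K g]; exact (A n).zero_mem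
  · intro u v _ _ hu hv
    constructor
    · rw [LeibnizAlgebra.add_bracket]; exact (A n).add_mem hu.1 hv.1
    · rw [LeibnizAlgebra.bracket_add]; exact (A n).add_mem hu.2 hv.2
  · intro c u _ hu
    constructor
    · rw [LeibnizAlgebra.smul_bracket]; exact (A n).smul_mem c hu.1
    · rw [LeibnizAlgebra.bracket_smul]; exact (A n).smul_mem c hu.2

end KeyLemma

/-- A direct sum of two quasi-Artinian Leibniz algebras, with componentwise bracket,
is quasi-Artinian. -/
theorem quasiArtinian_prod (K : Type u) [Field K] (g₁ g₂ : Type v)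
    [AddCommGroup g₁] [Module K g₁] [LeibnizAlgebra K g₁]
    [AddCommGroup g₂] [Module K g₂] [LeibnizAlgebra K g₂]
    (h₁ : QuasiArtinian K g₁) (h₂ : QuasiArtinian K g₂) :
    QuasiArtinian K (g₁ × g₂) := by
  intro I hId hdesc
  -- component chains
  set A : ℕ → Submodule K g₁ := fun n => (I n).comap (LinearMap.inl K g₁ g₂) with hAdef
  set B : ℕ → Submodule K g₂ := fun n => (I n).comap (LinearMap.inr K g₁ g₂) with hBdef
  have memA : ∀ n (y : g₁), y ∈ A n ↔ ((y, 0) : g₁ × g₂) ∈ I n := fun n y => Iff.rfl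
  have memB : ∀ n (z : g₂), z ∈ B n ↔ ((0, z) : g₁ × g₂) ∈ I n := fun n z => Iff.rfl
  have inl_bk : ∀ (u : g₁) (x : g₁ × g₂),
      ⁅((u, 0) : g₁ × g₂), x⁆ = ((⁅u, x.1⁆, 0) : g₁ × g₂) := by
    intro u x
    rw [prod_bracket_def]
    exact congrArg _ (zero_bracket K g₂ x.2)
  have bk_inl : ∀ (u : g₁) (x : g₁ × g₂),
      ⁅x, ((u, 0) : g₁ × g₂)⁆ = ((⁅x.1, u⁆, 0) : g₁ × g₂) := by
    intro u x
    rw [prod_bracket_def]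
    exact congrArg _ (bracket_zero K g₂ x.2)
  have inr_bk : ∀ (u : g₂) (x : g₁ × g₂),
      ⁅((0, u) : g₁ × g₂), x⁆ = ((0, ⁅u, x.2⁆) : g₁ × g₂) := by
    intro u x
    rw [prod_bracket_def]
    exact congrArg (fun t => (t, ⁅u, x.2⁆)) (zero_bracket K g₁ x.1)
  have bk_inr : ∀ (u : g₂) (x : g₁ × g₂),
      ⁅x, ((0, u) : g₁ × g₂)⁆ = ((0, ⁅x.2, u⁆) : g₁ × g₂) := by
    intro u x
    rw [prod_bracket_def]
    exact congrArg (fun t => (t, ⁅x.2, u⁆)) (bracket_zero K g₁ x.1)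
  have hAideal : ∀ n, IsIdeal K g₁ (A n) := by
    intro n x y hy
    have hy' : ((y, 0) : g₁ × g₂) ∈ I n := (memA n y).1 hy
    constructor
    · have := (hId n (x, 0) (y, 0) hy').1
      rw [inl_bk] at this
      exact (memA n _).2 this
    · have := (hId n (x, 0) (y, 0) hy').2
      rw [bk_inl] at this
      exact (memA n _).2 this
  have hBideal : ∀ n, IsIdeal K g₂ (B n) := by
    intro n x y hy
    have hy' : ((0, y) : g₁ × g₂) ∈ I n := (memB n y).1 hy
    constructor
    · have := (hId n (0, x) (0, y) hy').1
      rw [inr_bk] at this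
      exact (memB n _).2 this
    · have := (hId n (0, x) (0, y) hy').2
      rw [bk_inr] at this
      exact (memB n _).2 this
  have hAdesc : ∀ n, A (n + 1) ≤ A n := fun n y hy => hdesc n hy
  have hBdesc : ∀ n, B (n + 1) ≤ B n := fun n y hy => hdesc n hy
  obtain ⟨m₁, hm₁⟩ := h₁ A hAideal hAdesc
  obtain ⟨m₂, hm₂⟩ := h₂ B hBideal hBdesc
  set M : ℕ := max m₁ m₂ with hMdef
  refine ⟨M + 1, fun n => ?_⟩
  -- for x ∈ I (M+1), brackets of components with arbitrary elements land in A/B (M+1)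
  have hx1A : ∀ x ∈ I (M + 1), ∀ u : g₁, ⁅u, x.1⁆ ∈ A (M + 1) ∧ ⁅x.1, u⁆ ∈ A (M + 1) := by
    intro x hx u
    constructor
    · have := (hId (M + 1) (u, 0) x hx).1
      rw [inl_bk] at this
      exact (memA _ _).2 this
    · have := (hId (M + 1) (u, 0) x hx).2
      rw [bk_inl] at this
      exact (memA _ _).2 this
  have hx2B : ∀ x ∈ I (M + 1), ∀ u : g₂, ⁅u, x.2⁆ ∈ B (M + 1) ∧ ⁅x.2, u⁆ ∈ B (M + 1) := by
    intro x hx u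
    constructor
    · have := (hId (M + 1) (0, u) x hx).1
      rw [inr_bk] at this
      exact (memB _ _).2 this
    · have := (hId (M + 1) (0, u) x hx).2
      rw [bk_inr] at this
      exact (memB _ _).2 this
  have main : ∀ (a x : g₁ × g₂), a ∈ derived K (g₁ × g₂) (M + 1) → x ∈ I (M + 1) →
      ⁅a, x⁆ ∈ I n ∧ ⁅x, a⁆ ∈ I n := by
    intro a x ha hx
    have ha' := derived_prod_le K g₁ g₂ (M + 1) ha
    rw [Submodule.mem_prod] at ha'
    have c1 := qa_key K g₁ A hAdesc m₁ hm₁ M (le_max_left _ _) x.1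
      (hx1A x hx) ha'.1 n
    have c2 := qa_key K g₂ B hBdesc m₂ hm₂ M (le_max_right _ _) x.2
      (hx2B x hx) ha'.2 n
    constructor
    · have e : (⁅a, x⁆ : g₁ × g₂) =
          ((⁅a.1, x.1⁆, 0) : g₁ × g₂) + ((0, ⁅a.2, x.2⁆) : g₁ × g₂) := by
        rw [prod_bracket_def]; ext <;> simp
      rw [e]
      exact (I n).add_mem ((memA n _).1 c1.1) ((memB n _).1 c2.1)
    · have e : (⁅x, a⁆ : g₁ × g₂) =
          ((⁅x.1, a.1⁆, 0) : g₁ × g₂) + ((0, ⁅x.2, a.2⁆) : g₁ × g₂) := by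
        rw [prod_bracket_def]; ext <;> simp
      rw [e]
      exact (I n).add_mem ((memA n _).1 c1.2) ((memB n _).1 c2.2)
  constructor
  · rw [Leibniz.bk, Submodule.span_le]
    rintro z ⟨a, ha, x, hx, rfl⟩
    exact (main a x ha hx).1
  · rw [Leibniz.bk, Submodule.span_le]
    rintro z ⟨x, hx, a, ha, rfl⟩
    exact (main a x ha hx).2
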